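/- Let Φ = (A; A*; {E_i}; {E*_i}) be a Leonard system in 𝒜 ≅ Mat_{d+1}(K), let V be an irreducible 𝒜-module, and let v be a nonzero vector in E*_0 V. Then for 0 ≤ i ≤ d the vector E*_i A^i v is nonzero, hence a basis of the one-dimensional space E*_i V, and the sequence E*_0 A^0 v, E*_1 A^1 v, …, E*_d A^d v is a basis of V. -/

import Mathlib

open Matrix Polynomial

def IsTridiag {K : Type*} [Field K] {n : ℕ} (M : Matrix (Fin n) (Fin n) K) : Prop :=
  ∀ i j : Fin n, ((i : ℕ) + 1 < j ∨ (j : ℕ) + 1 < i) → M i j = 0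

def IsIrredTridiag {K : Type*} [Field K] {n : ℕ} (M : Matrix (Fin n) (Fin n) K) : Prop :=
  IsTridiag M ∧ ∀ i j : Fin n, ((i : ℕ) + 1 = j ∨ (j : ℕ) + 1 = i) → M i j ≠ 0

/-- Entry of a matrix with natural-number indices; `0` when out of range. -/
def mentry {K : Type*} [Field K] {n : ℕ} (M : Matrix (Fin n) (Fin n) K) (i j : ℕ) : K :=
  if h : i < n ∧ j < n then M ⟨i, h.1⟩ ⟨j, h.2⟩ else 0

/-- A family indexed by `Fin (d+1)` viewed as indexed by `ℕ`, with value `0` out of range. -/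
def natIdx {d : ℕ} {M : Type*} [Zero M] (E : Fin (d+1) → M) (n : ℕ) : M :=
  if h : n < d + 1 then E ⟨n, h⟩ else 0

/-- A Leonard system of diameter `d` in the matrix algebra `Mat_{d+1}(K)`:
`A`, `As` are multiplicity-free with eigenvalues `θ i`, `θs i` and primitive
idempotents `E i`, `Es i`, satisfying the tridiagonal conditions. -/
structure LeonardSystem (K : Type*) [Field K] (d : ℕ) where
  A : Matrix (Fin (d+1)) (Fin (d+1)) K
  As : Matrix (Fin (d+1)) (Fin (d+1)) K
  E : Fin (d+1) → Matrix (Fin (d+1)) (Fin (d+1)) K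
  Es : Fin (d+1) → Matrix (Fin (d+1)) (Fin (d+1)) K
  θ : Fin (d+1) → K
  θs : Fin (d+1) → K
  θ_inj : Function.Injective θ
  θs_inj : Function.Injective θs
  E_ne : ∀ i, E i ≠ 0
  Es_ne : ∀ i, Es i ≠ 0
  E_mul : ∀ i j, E i * E j = if i = j then E i else 0
  Es_mul : ∀ i j, Es i * Es j = if i = j then Es i else 0
  E_sum : ∑ i, E i = 1
  Es_sum : ∑ i, Es i = 1
  A_eq : A = ∑ i, θ i • E i
  As_eq : As = ∑ i, θs i • Es i
  EAsE_zero : ∀ i j : Fin (d+1), ((i:ℕ) + 1 < j ∨ (j:ℕ) + 1 < i) → E i * As * E j = 0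
  EAsE_ne : ∀ i j : Fin (d+1), ((i:ℕ) + 1 = j ∨ (j:ℕ) + 1 = i) → E i * As * E j ≠ 0
  EsAEs_zero : ∀ i j : Fin (d+1), ((i:ℕ) + 1 < j ∨ (j:ℕ) + 1 < i) → Es i * A * Es j = 0
  EsAEs_ne : ∀ i j : Fin (d+1), ((i:ℕ) + 1 = j ∨ (j:ℕ) + 1 = i) → Es i * A * Es j ≠ 0

/-- A Leonard pair in `Mat_{d+1}(K)`. -/
structure LeonardPair (K : Type*) [Field K] (d : ℕ) where
  A : Matrix (Fin (d+1)) (Fin (d+1)) K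
  As : Matrix (Fin (d+1)) (Fin (d+1)) K
  cond1 : ∃ P : Matrix (Fin (d+1)) (Fin (d+1)) K, IsUnit P ∧
    IsIrredTridiag (P⁻¹ * A * P) ∧ (P⁻¹ * As * P).IsDiag
  cond2 : ∃ P : Matrix (Fin (d+1)) (Fin (d+1)) K, IsUnit P ∧
    (P⁻¹ * A * P).IsDiag ∧ IsIrredTridiag (P⁻¹ * As * P)

/-!
Since `E*_j A E*_k = 0` for `j > k + 1`, the vector `A^n v` has no component in `E*_j V` for
`j > n`, so `E*_i A^i v = (E*_i A E*_{i-1}) E*_{i-1} A^{i-1} v`. The spaces `E*_i V` are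
lines (there are `d + 1` of them, nonzero and independent, in dimension `d + 1`), and the nonzero
map `E*_i A E*_{i-1}` cannot vanish on the line `E*_{i-1} V`; induction on `i` gives
`E*_i A^i v ≠ 0`. Nonzero vectors taken from the independent lines `E*_i V` form a basis.
-/

namespace Matrix

variable {K n : Type*} [Field K] [Fintype n]

theorem exists_mulVec_ne_zero {M : Matrix n n K} (hM : M ≠ 0) : ∃ w : n → K, M *ᵥ w ≠ 0 := by
  by_contra! h
  exact hM (ext_iff_mulVec.mpr fun w => by rw [h w, zero_mulVec])

theorem mulVec_ne_zero_of_mul_eq_self {e N : Matrix n n K} {x : n → K}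
    (hspan : ∀ w, ∃ c : K, e *ᵥ w = c • x) (hN : N * e = N) (hN0 : N ≠ 0) : N *ᵥ x ≠ 0 := by
  intro hNx
  refine hN0 (ext_iff_mulVec.mpr fun w => ?_)
  obtain ⟨c, hc⟩ := hspan w
  rw [← hN, ← mulVec_mulVec, hc, mulVec_smul, hNx, smul_zero, zero_mulVec]

end Matrix

namespace OrthogonalIdempotents

variable {K n ι : Type*} [Field K] [Fintype n] [DecidableEq n] {e : ι → Matrix n n K}

theorem mulVec_eq_ite [DecidableEq ι] (he : OrthogonalIdempotents e) {u : ι → n → K}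
    (hu : ∀ i, e i *ᵥ u i = u i) (i j : ι) : e i *ᵥ u j = if i = j then u j else 0 := by
  rw [← hu j, mulVec_mulVec, he.mul_eq]
  split_ifs with hij
  · rw [hij]
  · rw [zero_mulVec]

theorem linearIndependent_of_mulVec_eq_self (he : OrthogonalIdempotents e) {u : ι → n → K}
    (hu : ∀ i, e i *ᵥ u i = u i) (hu0 : ∀ i, u i ≠ 0) : LinearIndependent K u := by
  classical
  rw [linearIndependent_iff']
  intro s g hg i hi
  have hproj : e i *ᵥ ∑ j ∈ s, g j • u j = g i • u i := by
    simp only [mulVec_sum, mulVec_smul, he.mulVec_eq_ite hu, smul_ite, smul_zero,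
      Finset.sum_ite_eq, if_pos hi]
  rw [hg, mulVec_zero] at hproj
  exact (smul_eq_zero.mp hproj.symm).resolve_right (hu0 i)

theorem exists_mulVec_eq_smul [Fintype ι] (he : OrthogonalIdempotents e) (he0 : ∀ i, e i ≠ 0)
    (hcard : Fintype.card ι = Fintype.card n) {i : ι} {x : n → K} (hx : e i *ᵥ x = x)
    (hx0 : x ≠ 0) (w : n → K) : ∃ c : K, e i *ᵥ w = c • x := by
  classical
  have hline : ∀ j, ∃ z : n → K, e j *ᵥ z = z ∧ z ≠ 0 := fun j => by
    obtain ⟨y, hy⟩ := exists_mulVec_ne_zero (he0 j)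
    exact ⟨e j *ᵥ y, by rw [mulVec_mulVec, (he.idem j).eq], hy⟩
  choose z hz hz0 using hline
  set b := Function.update z i x
  have hb : ∀ j, e j *ᵥ b j = b j := fun j => by
    rcases eq_or_ne j i with rfl | hj
    · simpa [b] using hx
    · simpa [b, hj] using hz j
  have hb0 : ∀ j, b j ≠ 0 := fun j => by
    rcases eq_or_ne j i with rfl | hj
    · simpa [b] using hx0
    · simpa [b, hj] using hz0 j
  have hspan : Submodule.span K (Set.range b) = ⊤ :=
    (he.linearIndependent_of_mulVec_eq_self hb hb0).span_eq_top_of_card_eq_finrank'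
      (by rw [hcard, Module.finrank_fintype_fun_eq_card])
  obtain ⟨c, rfl⟩ : ∃ c : ι → K, ∑ j, c j • b j = w :=
    (Submodule.mem_span_range_iff_exists_fun K).mp (hspan ▸ Submodule.mem_top)
  refine ⟨c i, ?_⟩
  simp only [mulVec_sum, mulVec_smul, he.mulVec_eq_ite hb, smul_ite, smul_zero,
    Finset.sum_ite_eq, Finset.mem_univ, if_true, b, Function.update_self]

end OrthogonalIdempotents

namespace LeonardSystem

variable {K : Type*} [Field K] {d : ℕ} (L : LeonardSystem K d)

theorem completeOrthogonalIdempotents_Es : CompleteOrthogonalIdempotents L.Es :=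
  ⟨OrthogonalIdempotents.iff_mul_eq.mpr L.Es_mul, L.Es_sum⟩

theorem Es_mul_Es (i : Fin (d+1)) : L.Es i * L.Es i = L.Es i :=
  (L.completeOrthogonalIdempotents_Es.idem i).eq

theorem Es_mulVec_eq_smul (i : Fin (d+1)) {x : Fin (d+1) → K} (hx : L.Es i *ᵥ x = x)
    (hx0 : x ≠ 0) (w : Fin (d+1) → K) : ∃ c : K, L.Es i *ᵥ w = c • x :=
  L.completeOrthogonalIdempotents_Es.toOrthogonalIdempotents.exists_mulVec_eq_smul L.Es_ne
    rfl hx hx0 w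

theorem Es_mulVec_A_mulVec (j : Fin (d+1)) (y : Fin (d+1) → K) :
    L.Es j *ᵥ (L.A *ᵥ y) = ∑ k, (L.Es j * L.A * L.Es k) *ᵥ y := by
  rw [← sum_mulVec, ← Finset.mul_sum, L.Es_sum, mul_one, mulVec_mulVec]

variable {L} {v : Fin (d+1) → K}

theorem Es_mulVec_A_pow_mulVec_eq_zero (hv : L.Es 0 *ᵥ v = v) {n : ℕ} :
    ∀ {j : Fin (d+1)}, n < j → L.Es j *ᵥ (L.A ^ n *ᵥ v) = 0 := by
  induction n with
  | zero =>
    intro j hj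
    rw [pow_zero, one_mulVec, ← hv, mulVec_mulVec,
      L.completeOrthogonalIdempotents_Es.ortho (Fin.pos_iff_ne_zero.mp hj), zero_mulVec]
  | succ n ih =>
    intro j hj
    rw [pow_succ', ← mulVec_mulVec, Es_mulVec_A_mulVec]
    refine Finset.sum_eq_zero fun k _ => ?_
    rcases lt_or_ge n k with hk | hk
    · rw [← mulVec_mulVec, ih hk, mulVec_zero]
    · rw [L.EsAEs_zero j k (Or.inr (by omega)), zero_mulVec]

theorem Es_mulVec_A_pow_mulVec_succ (hv : L.Es 0 *ᵥ v = v) {i j : Fin (d+1)}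
    (hij : (j : ℕ) = i + 1) :
    L.Es j *ᵥ (L.A ^ (j : ℕ) *ᵥ v) = (L.Es j * L.A * L.Es i) *ᵥ (L.A ^ (i : ℕ) *ᵥ v) := by
  rw [hij, pow_succ', ← mulVec_mulVec, Es_mulVec_A_mulVec]
  refine Finset.sum_eq_single i (fun k _ hki => ?_) (by simp)
  rcases lt_or_gt_of_ne (Fin.val_ne_of_ne hki) with hk | hk
  · rw [L.EsAEs_zero j k (Or.inr (by omega)), zero_mulVec]
  · rw [← mulVec_mulVec, Es_mulVec_A_pow_mulVec_eq_zero hv hk, mulVec_zero]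

theorem Es_mulVec_A_pow_mulVec_ne_zero (hv : L.Es 0 *ᵥ v = v) (hv0 : v ≠ 0) (i : Fin (d+1)) :
    L.Es i *ᵥ (L.A ^ (i : ℕ) *ᵥ v) ≠ 0 := by
  induction i using Fin.induction with
  | zero => rwa [Fin.val_zero, pow_zero, one_mulVec, hv]
  | succ i ih =>
    have hN : L.Es i.succ * L.A * L.Es i.castSucc * L.Es i.castSucc =
        L.Es i.succ * L.A * L.Es i.castSucc := by
      rw [mul_assoc, Es_mul_Es]
    have hx : L.Es i.castSucc *ᵥ (L.Es i.castSucc *ᵥ (L.A ^ (i : ℕ) *ᵥ v)) =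
        L.Es i.castSucc *ᵥ (L.A ^ (i : ℕ) *ᵥ v) := by
      rw [mulVec_mulVec, Es_mul_Es]
    rw [Es_mulVec_A_pow_mulVec_succ hv (i := i.castSucc) (by simp), ← hN, ← mulVec_mulVec]
    exact mulVec_ne_zero_of_mul_eq_self (L.Es_mulVec_eq_smul _ hx ih) hN
      (L.EsAEs_ne _ _ (Or.inr (by simp)))

end LeonardSystem

theorem stmt9 {K : Type*} [Field K] {d : ℕ} (L : LeonardSystem K d)
    (v : Fin (d+1) → K) (hv : L.Es 0 *ᵥ v = v) (hv0 : v ≠ 0) :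
    (∀ i : Fin (d+1), (L.Es i * L.A ^ (i:ℕ)) *ᵥ v ≠ 0) ∧
    (∀ i : Fin (d+1), ∀ w : Fin (d+1) → K, L.Es i *ᵥ w = w →
      ∃ c : K, w = c • ((L.Es i * L.A ^ (i:ℕ)) *ᵥ v)) ∧
    LinearIndependent K (fun i : Fin (d+1) => (L.Es i * L.A ^ (i:ℕ)) *ᵥ v) ∧
    Submodule.span K (Set.range (fun i : Fin (d+1) => (L.Es i * L.A ^ (i:ℕ)) *ᵥ v)) = ⊤ := by
  set u := fun i : Fin (d+1) => (L.Es i * L.A ^ (i:ℕ)) *ᵥ v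
  have hu0 : ∀ i, u i ≠ 0 := fun i => by
    simpa only [u, ← mulVec_mulVec] using LeonardSystem.Es_mulVec_A_pow_mulVec_ne_zero hv hv0 i
  have huEs : ∀ i, L.Es i *ᵥ u i = u i := fun i => by
    simp only [u, mulVec_mulVec, ← mul_assoc, L.Es_mul_Es]
  have hli : LinearIndependent K u :=
    L.completeOrthogonalIdempotents_Es.toOrthogonalIdempotents.linearIndependent_of_mulVec_eq_self
      huEs hu0
  refine ⟨hu0, fun i w hw => ?_, hli, hli.span_eq_top_of_card_eq_finrank' (by simp)⟩
  obtain ⟨c, hc⟩ := L.Es_mulVec_eq_smul i (huEs i) (hu0 i) w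
  exact ⟨c, hw.symm.trans hc⟩
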